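/- A connected graph G is a partial cube if and only if G is bipartite and the Djoković–Winkler relation Θ on E(G) is transitive (i.e., Θ equals its transitive closure Θ*). -/

import Mathlib

/-!
If `G` sits isometrically in a hypercube, each edge flips exactly one coordinate, and the four
distances in the definition of Θ show that two edges are Θ-related exactly when they flip the
same coordinate; so Θ is transitive on edges, and the parity of the number of ones 2-colours `G`.

Conversely, in a connected bipartite graph every vertex is strictly closer to one end of an edge
`ab` than to the other, and an edge is Θ-related to `ab` exactly when crossing it changes which
end is closer. If Θ is transitive, send `w` to the vector recording, for each Θ-class, on which
side of a representative edge it lies. On a geodesic `x z … y` the edge `xz` is Θ-related to no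
later edge, so the first step changes exactly one coordinate and the rest never change it back;
by induction the Hamming distance equals the graph distance.
-/

open SimpleGraph
open scoped Classical

/-- The hypercube graph `Q_n`: vertices are 0-1 `n`-tuples, adjacent iff they
differ in exactly one coordinate. -/
def cubeGraph (n : ℕ) : SimpleGraph (Fin n → Bool) where
  Adj x y := ∃! i, x i ≠ y i
  symm := by
    constructor
    rintro x y ⟨i, hi, hu⟩
    exact ⟨i, Ne.symm hi, fun j hj => hu j (Ne.symm hj)⟩
  loopless := by
    constructor
    rintro x ⟨i, hi, -⟩
    exact hi rfl

/-- A partial cube: a connected graph isometrically embeddable into some hypercube. -/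
def IsPartialCube {V : Type*} (G : SimpleGraph V) : Prop :=
  G.Connected ∧ ∃ (n : ℕ) (φ : V → (Fin n → Bool)),
    ∀ u v : V, (cubeGraph n).dist (φ u) (φ v) = G.dist u v

/-- The Djoković–Winkler relation `Θ` on (unordered pairs representing) edges:
`e₁ = u₁v₁` and `e₂ = u₂v₂` are related iff
`d(u₁,u₂) + d(v₁,v₂) ≠ d(u₁,v₂) + d(v₁,u₂)`. -/
def theta {V : Type*} (G : SimpleGraph V) (e f : Sym2 V) : Prop :=
  ∃ u₁ v₁ u₂ v₂ : V, e = s(u₁, v₁) ∧ f = s(u₂, v₂) ∧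
    G.dist u₁ u₂ + G.dist v₁ v₂ ≠ G.dist u₁ v₂ + G.dist v₁ u₂

section Hamming

variable {ι β : Type*} [Fintype ι] [DecidableEq β] {x y : ι → β} {i : ι}

lemma hammingDist_eq_one_iff : hammingDist x y = 1 ↔ ∃ i, ∀ k, x k ≠ y k ↔ k = i := by
  simp only [hammingDist, Finset.card_eq_one, Finset.ext_iff, Finset.mem_filter,
    Finset.mem_univ, true_and, Finset.mem_singleton]

lemma hammingDist_sub_hammingDist_of_ne_iff (hxy : ∀ k, x k ≠ y k ↔ k = i) (z : ι → β) :
    (hammingDist x z : ℤ) - hammingDist y z =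
      (if x i ≠ z i then 1 else 0) - (if y i ≠ z i then 1 else 0) := by
  simp only [hammingDist, Finset.card_filter, Nat.cast_sum, Nat.cast_ite, Nat.cast_one,
    Nat.cast_zero, ← Finset.sum_sub_distrib]
  refine Finset.sum_eq_single i (fun k _ hk => ?_) (by simp)
  rw [not_not.mp (mt (hxy k).mp hk), sub_self]

lemma hammingDist_eq_hammingDist_add_one_of_ne_iff (hxy : ∀ k, x k ≠ y k ↔ k = i)
    {z : ι → β} (hyz : y i = z i) : hammingDist x z = hammingDist y z + 1 := by
  have hxz : x i ≠ z i := hyz ▸ (hxy i).mpr rfl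
  have := hammingDist_sub_hammingDist_of_ne_iff hxy z
  rw [if_pos hxz, if_neg (not_not.mpr hyz)] at this
  omega

lemma hammingDist_comp_equiv {κ : Type*} [Fintype κ] (e : κ ≃ ι) (x y : ι → β) :
    hammingDist (x ∘ e) (y ∘ e) = hammingDist x y := by
  simp only [hammingDist]
  exact Finset.card_equiv e (by simp)

lemma hammingDist_add_ne_iff_of_ne_iff {x y : ι → Bool} (hxy : ∀ k, x k ≠ y k ↔ k = i)
    (z w : ι → Bool) :
    hammingDist x z + hammingDist y w ≠ hammingDist x w + hammingDist y z ↔ z i ≠ w i := by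
  have hz := hammingDist_sub_hammingDist_of_ne_iff hxy z
  have hw := hammingDist_sub_hammingDist_of_ne_iff hxy w
  have hi : x i ≠ y i := (hxy i).mpr rfl
  revert hz hw hi
  cases x i <;> cases y i <;> cases z i <;> cases w i <;> simp <;> omega

end Hamming

section Cube

variable {n : ℕ}

lemma cubeGraph_adj_iff {x y : Fin n → Bool} :
    (cubeGraph n).Adj x y ↔ ∃ i, ∀ k, x k ≠ y k ↔ k = i :=
  ⟨fun ⟨i, hi, hu⟩ => ⟨i, fun k => ⟨hu k, by rintro rfl; exact hi⟩⟩,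
    fun ⟨i, h⟩ => ⟨i, (h i).mpr rfl, fun k => (h k).mp⟩⟩

lemma cubeGraph_adj_iff_hammingDist_eq_one {x y : Fin n → Bool} :
    (cubeGraph n).Adj x y ↔ hammingDist x y = 1 := by
  rw [cubeGraph_adj_iff, hammingDist_eq_one_iff]

lemma cubeGraph_exists_walk_length_eq_hammingDist (x y : Fin n → Bool) :
    ∃ p : (cubeGraph n).Walk x y, p.length = hammingDist x y := by
  suffices ∀ d x, hammingDist x y = d → ∃ p : (cubeGraph n).Walk x y, p.length = d from
    this _ x rfl
  intro d
  induction d with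
  | zero =>
    intro x hx
    obtain rfl := hammingDist_eq_zero.mp hx
    exact ⟨.nil, rfl⟩
  | succ d ih =>
    intro x hx
    obtain ⟨i, hi⟩ := Function.ne_iff.mp (hammingDist_pos.mp (by omega : 0 < hammingDist x y))
    set x' := Function.update x i (y i)
    have hxx' : ∀ k, x k ≠ x' k ↔ k = i := fun k => by
      by_cases hk : k = i <;> simp [x', hk, hi]
    have hx'y := hammingDist_eq_hammingDist_add_one_of_ne_iff hxx' (z := y) (by simp [x'])
    obtain ⟨p, hp⟩ := ih x' (by omega)
    exact ⟨.cons (cubeGraph_adj_iff.mpr ⟨i, hxx'⟩) p, by simp [hp]⟩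

lemma hammingDist_le_length {x y : Fin n → Bool} (p : (cubeGraph n).Walk x y) :
    hammingDist x y ≤ p.length := by
  induction p with
  | nil => simp
  | @cons x z y h p ih =>
    have := hammingDist_triangle x z y
    rw [cubeGraph_adj_iff_hammingDist_eq_one.mp h] at this
    rw [Walk.length_cons]
    omega

lemma cubeGraph_dist (x y : Fin n → Bool) : (cubeGraph n).dist x y = hammingDist x y := by
  obtain ⟨p, hp⟩ := cubeGraph_exists_walk_length_eq_hammingDist x y
  obtain ⟨q, hq⟩ := p.reachable.exists_walk_length_eq_dist
  exact le_antisymm (hp ▸ dist_le p) (hq ▸ hammingDist_le_length q)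

lemma cubeGraph_colorable_two : (cubeGraph n).Colorable 2 := by
  let parity : (cubeGraph n).Coloring Bool :=
    Coloring.mk (fun x => decide (Even (hammingDist x fun _ => false))) fun {x y} h => by
      obtain ⟨i, hi⟩ := cubeGraph_adj_iff.mp h
      have hxy := hammingDist_sub_hammingDist_of_ne_iff hi fun _ => false
      have hne := (hi i).mpr rfl
      have hstep : hammingDist x (fun _ => false) = hammingDist y (fun _ => false) + 1 ∨
          hammingDist y (fun _ => false) = hammingDist x (fun _ => false) + 1 := by
        revert hxy hne
        cases x i <;> cases y i <;> simp <;> omega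
      rcases hstep with h | h <;>
        simp only [h, Nat.even_add_one, ne_eq, decide_eq_decide] <;> tauto
  simpa using parity.colorable

end Cube

lemma isPartialCube_iff {V : Type*} {G : SimpleGraph V} : IsPartialCube G ↔
    G.Connected ∧ ∃ (n : ℕ) (φ : V → Fin n → Bool),
      ∀ u v, hammingDist (φ u) (φ v) = G.dist u v := by
  simp only [IsPartialCube, cubeGraph_dist]

lemma isPartialCube_of_hammingDist {V ι : Type*} [Fintype ι] {G : SimpleGraph V}
    (hconn : G.Connected) (φ : V → ι → Bool)
    (hφ : ∀ u v, hammingDist (φ u) (φ v) = G.dist u v) : IsPartialCube G :=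
  isPartialCube_iff.mpr ⟨hconn, Fintype.card ι, fun v => φ v ∘ (Fintype.equivFin ι).symm,
    fun u v => by rw [hammingDist_comp_equiv, hφ]⟩

section Theta

variable {V : Type*} {G : SimpleGraph V}

def ThetaTransitive (G : SimpleGraph V) : Prop :=
  ∀ e f g : Sym2 V, e ∈ G.edgeSet → f ∈ G.edgeSet → g ∈ G.edgeSet →
    theta G e f → theta G f g → theta G e g

lemma theta_mk_iff {u v a b : V} :
    theta G s(u, v) s(a, b) ↔ G.dist u a + G.dist v b ≠ G.dist u b + G.dist v a := by
  refine ⟨?_, fun h => ⟨u, v, a, b, rfl, rfl, h⟩⟩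
  rintro ⟨u', v', a', b', he, hf, h⟩
  rw [Sym2.eq_iff] at he hf
  rcases he with ⟨rfl, rfl⟩ | ⟨rfl, rfl⟩ <;> rcases hf with ⟨rfl, rfl⟩ | ⟨rfl, rfl⟩ <;>
    omega

lemma theta_symm {e f : Sym2 V} : theta G e f → theta G f e := by
  rintro ⟨u, v, a, b, rfl, rfl, h⟩
  refine ⟨a, b, u, v, rfl, rfl, ?_⟩
  rw [dist_comm (u := a), dist_comm (u := b), dist_comm (u := a), dist_comm (u := b)]
  omega

lemma theta_self_of_adj {u v : V} (h : G.Adj u v) : theta G s(u, v) s(u, v) := by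
  rw [theta_mk_iff, dist_self, dist_self, dist_comm, dist_eq_one_iff_adj.mpr h.symm]
  omega

lemma theta_mk_iff_of_hammingDist {ι : Type*} [Fintype ι] {φ : V → ι → Bool}
    (hφ : ∀ u v, hammingDist (φ u) (φ v) = G.dist u v) {u v : V} {i : ι}
    (hi : ∀ k, φ u k ≠ φ v k ↔ k = i) (a b : V) :
    theta G s(u, v) s(a, b) ↔ φ a i ≠ φ b i := by
  rw [theta_mk_iff, ← hφ, ← hφ, ← hφ, ← hφ]
  exact hammingDist_add_ne_iff_of_ne_iff hi _ _

lemma thetaTransitive_of_hammingDist {ι : Type*} [Fintype ι] {φ : V → ι → Bool}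
    (hφ : ∀ u v, hammingDist (φ u) (φ v) = G.dist u v) : ThetaTransitive G := by
  have hcoord : ∀ {u v}, G.Adj u v → ∃ i, ∀ k, φ u k ≠ φ v k ↔ k = i := fun huv =>
    hammingDist_eq_one_iff.mp ((hφ _ _).trans (dist_eq_one_iff_adj.mpr huv))
  intro e f g he hf _
  induction e using Sym2.ind with | _ u₁ v₁ =>
  induction f using Sym2.ind with | _ u₂ v₂ =>
  induction g using Sym2.ind with | _ u₃ v₃ =>
  obtain ⟨i₁, h₁⟩ := hcoord he
  obtain ⟨i₂, h₂⟩ := hcoord hf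
  rw [theta_mk_iff_of_hammingDist hφ h₁, theta_mk_iff_of_hammingDist hφ h₁,
    theta_mk_iff_of_hammingDist hφ h₂, h₂ i₁]
  rintro rfl
  exact id

theorem IsPartialCube.thetaTransitive (h : IsPartialCube G) : ThetaTransitive G :=
  let ⟨_, _, _, hφ⟩ := isPartialCube_iff.mp h
  thetaTransitive_of_hammingDist hφ

theorem IsPartialCube.colorable_two (h : IsPartialCube G) : G.Colorable 2 := by
  obtain ⟨-, n, φ, hφ⟩ := h
  exact cubeGraph_colorable_two.of_hom
    ⟨φ, fun huv => dist_eq_one_iff_adj.mp (by rw [hφ]; exact dist_eq_one_iff_adj.mpr huv)⟩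

end Theta

section Geodesic

variable {V : Type*} {G : SimpleGraph V}

lemma SimpleGraph.Walk.apply_eq_of_forall_mem_darts {α : Type*} (f : V → α) {u v : V}
    (p : G.Walk u v) (h : ∀ d ∈ p.darts, f d.fst = f d.snd) : f u = f v := by
  induction p with
  | nil => rfl
  | cons huw p ih =>
    simp only [Walk.darts_cons, List.mem_cons, forall_eq_or_imp] at h
    exact h.1.trans (ih h.2)

lemma dist_eq_dist_add_one_of_mem_support {x z y w : V} {h : G.Adj x z} {q : G.Walk z y}
    (hp : (q.cons h).length = G.dist x y) (hw : w ∈ q.support) :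
    G.dist x w = G.dist z w + 1 := by
  have hq : (q.takeUntil w hw).length = G.dist z w :=
    length_eq_dist_of_subwalk (length_eq_dist_of_subwalk hp (q.isSubwalk_cons h))
      (q.isSubwalk_takeUntil hw)
  have hxw : ((q.takeUntil w hw).cons h).length = G.dist x w :=
    length_eq_dist_of_subwalk hp ⟨.nil, q.dropUntil w hw, by simp [q.take_spec hw]⟩
  rw [← hxw, ← hq, Walk.length_cons]

lemma not_theta_of_mem_darts {x z y : V} {h : G.Adj x z} {q : G.Walk z y}
    (hp : (q.cons h).length = G.dist x y) {d : G.Dart} (hd : d ∈ q.darts) :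
    ¬ theta G s(x, z) d.edge := by
  have ha := dist_eq_dist_add_one_of_mem_support hp (q.dart_fst_mem_support_of_mem_darts hd)
  have hb := dist_eq_dist_add_one_of_mem_support hp (q.dart_snd_mem_support_of_mem_darts hd)
  rw [Dart.edge, theta_mk_iff]
  omega

end Geodesic

section SemicubeEmbedding

variable {V : Type*} {G : SimpleGraph V}

lemma dist_eq_add_one_or_of_adj (hconn : G.Connected) (hcol : G.Colorable 2) {u v : V}
    (huv : G.Adj u v) (x : V) :
    G.dist x v = G.dist x u + 1 ∨ G.dist x u = G.dist x v + 1 := by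
  have hne : G.dist x u ≠ G.dist x v := by
    let c : G.Coloring Bool := hcol.toColoring (by simp)
    obtain ⟨p, hp⟩ := hconn.exists_walk_length_eq_dist x u
    obtain ⟨q, hq⟩ := hconn.exists_walk_length_eq_dist x v
    have hp' := c.even_length_iff_congr p
    have hq' := c.even_length_iff_congr q
    have hc := c.valid huv
    intro h
    rw [← hp, ← hq] at h
    rw [h] at hp'
    revert hp' hq' hc
    cases c x <;> cases c u <;> cases c v <;> simp
  rcases huv.diff_dist_adj (u := x) with h | h | h <;> omega

lemma theta_mk_iff_of_colorable_two (hconn : G.Connected) (hcol : G.Colorable 2) {u v a b : V}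
    (huv : G.Adj u v) :
    theta G s(u, v) s(a, b) ↔ ¬ (G.dist a u < G.dist a v ↔ G.dist b u < G.dist b v) := by
  have ha := dist_eq_add_one_or_of_adj hconn hcol huv a
  have hb := dist_eq_add_one_or_of_adj hconn hcol huv b
  rw [theta_mk_iff, dist_comm (u := u) (v := a), dist_comm (u := v) (v := b),
    dist_comm (u := u) (v := b), dist_comm (u := v) (v := a)]
  omega

def thetaSetoid (htrans : ThetaTransitive G) : Setoid G.Dart where
  r d d' := theta G d.edge d'.edge
  iseqv := ⟨fun d => theta_self_of_adj d.adj, theta_symm,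
    fun h h' => htrans _ _ _ (Dart.edge_mem _) (Dart.edge_mem _) (Dart.edge_mem _) h h'⟩

/-- Coordinate `c` records whether `w` lies in the semicube `W_ab = {w | d(w,a) < d(w,b)}` of the
representative dart `ab` of the Θ-class `c`. -/
noncomputable def semicubeVector (htrans : ThetaTransitive G) (w : V) :
    Quotient (thetaSetoid htrans) → Bool :=
  fun c => decide (G.dist w c.out.fst < G.dist w c.out.snd)

lemma semicubeVector_ne_iff (hconn : G.Connected) (hcol : G.Colorable 2)
    (htrans : ThetaTransitive G) (d : G.Dart) (c : Quotient (thetaSetoid htrans)) :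
    semicubeVector htrans d.fst c ≠ semicubeVector htrans d.snd c ↔ c = ⟦d⟧ :=
  calc semicubeVector htrans d.fst c ≠ semicubeVector htrans d.snd c
      ↔ theta G c.out.edge d.edge := by
        simp only [semicubeVector, Dart.edge, ne_eq, decide_eq_decide,
          theta_mk_iff_of_colorable_two hconn hcol c.out.adj]
    _ ↔ ⟦c.out⟧ = ⟦d⟧ := (Quotient.eq_iff_equiv (r := thetaSetoid htrans)).symm
    _ ↔ c = ⟦d⟧ := by rw [Quotient.out_eq]

lemma hammingDist_semicubeVector [Fintype V] (hconn : G.Connected) (hcol : G.Colorable 2)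
    (htrans : ThetaTransitive G) {x y : V} (p : G.Walk x y) (hp : p.length = G.dist x y) :
    hammingDist (semicubeVector htrans x) (semicubeVector htrans y) = p.length := by
  induction p with
  | nil => simp
  | @cons x z y h q ih =>
    let xz : G.Dart := ⟨(x, z), h⟩
    have hxz := semicubeVector_ne_iff hconn hcol htrans xz
    have hzy : semicubeVector htrans z ⟦xz⟧ = semicubeVector htrans y ⟦xz⟧ :=
      q.apply_eq_of_forall_mem_darts (semicubeVector htrans · ⟦xz⟧) fun d hd => by
        by_contra hne
        exact not_theta_of_mem_darts hp hd
          (Quotient.exact ((semicubeVector_ne_iff hconn hcol htrans d _).mp hne))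
    rw [hammingDist_eq_hammingDist_add_one_of_ne_iff hxz hzy,
      ih (length_eq_dist_of_subwalk hp (q.isSubwalk_cons h)), Walk.length_cons]

theorem isPartialCube_of_colorable_two_of_thetaTransitive [Fintype V]
    (hconn : G.Connected) (hcol : G.Colorable 2) (htrans : ThetaTransitive G) : IsPartialCube G :=
  isPartialCube_of_hammingDist hconn (semicubeVector htrans) fun u v => by
    obtain ⟨p, hp⟩ := hconn.exists_walk_length_eq_dist u v
    rw [hammingDist_semicubeVector hconn hcol htrans p hp, hp]

end SemicubeEmbedding

theorem stmt9 {V : Type*} [Fintype V] (G : SimpleGraph V) (hconn : G.Connected) :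
    IsPartialCube G ↔
      (G.Colorable 2 ∧
        ∀ e f g : Sym2 V, e ∈ G.edgeSet → f ∈ G.edgeSet → g ∈ G.edgeSet →
          theta G e f → theta G f g → theta G e g) :=
  ⟨fun h => ⟨h.colorable_two, h.thetaTransitive⟩,
    fun ⟨hcol, htrans⟩ => isPartialCube_of_colorable_two_of_thetaTransitive hconn hcol htrans⟩
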